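/- arXiv:1803.10431 — 7 statements merged into one kernel-verified Lean document; each statement's English description precedes it below -/
import Mathlib

section
/- The set of dominators of any fixed node n is totally ordered by the dominance relation: if m₁ and m₂ both dominate n, then m₁ dominates m₂ or m₂ dominates m₁. -/
variable {V : Type*}

def IsPathFrom (E : V → V → Prop) (r n : V) (p : List V) : Prop :=
  p.Chain' E ∧ p.head? = some r ∧ p.getLast? = some n

def Dominates (E : V → V → Prop) (r m n : V) : Prop :=
  ∀ p : List V, IsPathFrom E r n p → m ∈ p

def Reachable (E : V → V → Prop) (r n : V) : Prop :=
  ∃ p : List V, IsPathFrom E r n p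

/-!
If neither of two dominators `m₁`, `m₂` of `n` dominated the other, take a path from the entry
to `n` and its last visit to `{m₁, m₂}`, say to `m₁`. The rest of that path avoids `m₂`, and so
does some path from the entry to `m₁`; their concatenation reaches `n` while avoiding `m₂`.
-/

theorem List.exists_eq_append_cons_of_last_mem {α : Type*} {P : α → Prop} :
    ∀ {l : List α}, (∃ y ∈ l, P y) →
      ∃ l₁ x l₂, l = l₁ ++ x :: l₂ ∧ P x ∧ ∀ y ∈ l₂, ¬ P y
  | [], ⟨_, hy, _⟩ => absurd hy List.not_mem_nil
  | a :: l, h => by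
    by_cases hl : ∃ y ∈ l, P y
    · obtain ⟨l₁, x, l₂, rfl, hx, hl₂⟩ := exists_eq_append_cons_of_last_mem hl
      exact ⟨a :: l₁, x, l₂, rfl, hx, hl₂⟩
    · obtain ⟨y, hy, hPy⟩ := h
      obtain rfl | hy := List.mem_cons.mp hy
      · exact ⟨[], y, l, rfl, hPy, fun z hz hPz => hl ⟨z, hz, hPz⟩⟩
      · exact absurd ⟨y, hy, hPy⟩ hl

namespace IsPathFrom

variable {E : V → V → Prop} {r n : V}

theorem exists_last_mem {p : List V} (hp : IsPathFrom E r n p) {P : V → Prop}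
    (h : ∃ y ∈ p, P y) : ∃ x T, P x ∧ IsPathFrom E x n (x :: T) ∧ ∀ y ∈ T, ¬ P y := by
  obtain ⟨p₁, x, T, rfl, hx, hT⟩ := List.exists_eq_append_cons_of_last_mem h
  obtain ⟨hchain, -, hlast⟩ := hp
  refine ⟨x, T, hx, ⟨(List.isChain_append.mp hchain).2.1, rfl, ?_⟩, hT⟩
  rwa [List.getLast?_append_of_ne_nil _ (List.cons_ne_nil x T)] at hlast

theorem append {x : V} {p T : List V} (hp : IsPathFrom E r x p)
    (hT : IsPathFrom E x n (x :: T)) : IsPathFrom E r n (p ++ T) := by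
  obtain ⟨hpc, hph, hpl⟩ := hp
  obtain ⟨hTc, -, hTl⟩ := hT
  have hp_ne : p ≠ [] := by rintro rfl; simp at hph
  refine ⟨List.isChain_append.mpr ⟨hpc, (List.isChain_cons.mp hTc).2, ?_⟩, ?_, ?_⟩
  · intro a ha b hb
    rw [hpl, Option.mem_some_iff] at ha
    exact ha ▸ (List.isChain_cons.mp hTc).1 b hb
  · rwa [List.head?_append_of_ne_nil _ hp_ne]
  · rcases T with _ | ⟨b, T⟩
    · simpa [hpl] using hTl
    · rwa [List.getLast?_append_of_ne_nil _ (List.cons_ne_nil b T), ← List.getLast?_cons_cons]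

end IsPathFrom

theorem Dominates.of_isPathFrom_cons {E : V → V → Prop} {r m x n : V} {T : List V}
    (hdom : Dominates E r m n) (hT : IsPathFrom E x n (x :: T)) (hm : m ∉ T) :
    Dominates E r m x := by
  intro p hp
  simpa [hm] using hdom _ (hp.append hT)

/-- The dominators of a fixed node are totally ordered by dominance. -/
theorem dominators_totally_ordered (E : V → V → Prop) (r : V)
    (hreach : ∀ x : V, Reachable E r x) (n m₁ m₂ : V)
    (h1 : Dominates E r m₁ n) (h2 : Dominates E r m₂ n) :
    Dominates E r m₁ m₂ ∨ Dominates E r m₂ m₁ := by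
  by_contra! ⟨hn₁₂, hn₂₁⟩
  obtain ⟨p, hp⟩ := hreach n
  obtain ⟨x, T, hx, hxn, hT⟩ :=
    hp.exists_last_mem (P := fun y => y = m₁ ∨ y = m₂) ⟨m₁, h1 p hp, Or.inl rfl⟩
  rcases hx with rfl | rfl
  · exact hn₂₁ (h2.of_isPathFrom_cons hxn fun h => hT _ h (Or.inr rfl))
  · exact hn₁₂ (h1.of_isPathFrom_cons hxn fun h => hT _ h (Or.inl rfl))
end

section
/- Every node n other than the entry node r has a unique immediate dominator: there exists exactly one node m that strictly dominates n and is strictly dominated by every other strict dominator of n. -/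
variable {V : Type*}

def StrictDom (E : V → V → Prop) (r m n : V) : Prop :=
  m ≠ n ∧ Dominates E r m n

def ImmDom (E : V → V → Prop) (r m n : V) : Prop :=
  StrictDom E r m n ∧ ∀ m' : V, StrictDom E r m' n → m' ≠ m → StrictDom E r m' m

/-!
Fix a path `p` from `r` to `n`. Every strict dominator of `n` lies on `p`, and `r` is one of
them; let `m` be the one occurring last. Any other strict dominator `m'` of `n` occurs only
before `m`, so a path to `m` that avoided `m'` could be continued along the rest of `p` to a path
to `n` avoiding `m'`. Hence `m'` strictly dominates `m`, and `m` is an immediate dominator.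
Uniqueness comes from antisymmetry of dominance: on a path to `b`, cut at the first occurrence
of `a` or `b`; the prefix reaches that node while avoiding the other one.
-/

namespace List

variable {α : Type*}

theorem exists_eq_append_cons_first {P : α → Prop} {l : List α} (h : ∃ x ∈ l, P x) :
    ∃ u x w, l = u ++ x :: w ∧ P x ∧ ∀ y ∈ u, ¬ P y := by
  induction l with
  | nil => simp at h
  | cons a t ih =>
    by_cases ha : P a
    · exact ⟨[], a, t, rfl, ha, by simp⟩
    · obtain ⟨x, hx, hPx⟩ := h
      have hxt : x ∈ t := (mem_cons.mp hx).resolve_left (by rintro rfl; exact ha hPx)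
      obtain ⟨u, y, w, rfl, hy, hu⟩ := ih ⟨x, hxt, hPx⟩
      exact ⟨a :: u, y, w, rfl, hy, by simpa [ha] using hu⟩

theorem exists_eq_append_cons_last {P : α → Prop} {l : List α} (h : ∃ x ∈ l, P x) :
    ∃ u x w, l = u ++ x :: w ∧ P x ∧ ∀ y ∈ w, ¬ P y := by
  obtain ⟨u, x, w, hl, hx, hu⟩ := exists_eq_append_cons_first (l := l.reverse) (by simpa using h)
  refine ⟨w.reverse, x, u.reverse, ?_, hx, by simpa using hu⟩
  simpa using congrArg reverse hl

end List

section Dominance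

variable {E : V → V → Prop} {r m n : V} {p u w : List V}

theorem IsPathFrom.head_mem (hp : IsPathFrom E r n p) : r ∈ p :=
  List.mem_of_mem_head? hp.2.1

theorem IsPathFrom.last_mem (hp : IsPathFrom E r n p) : n ∈ p :=
  List.mem_of_mem_getLast? hp.2.2

theorem isPathFrom_append_cons_iff :
    IsPathFrom E r n (u ++ m :: w) ↔ IsPathFrom E r m (u ++ [m]) ∧ IsPathFrom E m n (m :: w) := by
  have h_head : (u ++ m :: w).head? = (u ++ [m]).head? := by cases u <;> rfl
  have h_last : (u ++ m :: w).getLast? = (m :: w).getLast? :=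
    List.getLast?_append_of_ne_nil _ (List.cons_ne_nil _ _)
  simp only [IsPathFrom, h_head, h_last, List.getLast?_concat, List.head?_cons]
  change (u ++ m :: w).IsChain E ∧ _ ↔ ((u ++ [m]).IsChain E ∧ _) ∧ (m :: w).IsChain E ∧ _
  rw [List.isChain_split]
  tauto

theorem dominates_entry : Dominates E r r n :=
  fun _ hp ↦ hp.head_mem

theorem Dominates.of_isPathFrom_append_cons {d : V} (hd : Dominates E r d n)
    (hp : IsPathFrom E r n (u ++ m :: w)) (hdw : d ∉ m :: w) : Dominates E r d m := by
  intro q hq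
  have hq_eq : q.dropLast ++ [m] = q := List.dropLast_append_getLast? m hq.2.2
  have hqw : IsPathFrom E r n (q.dropLast ++ m :: w) :=
    isPathFrom_append_cons_iff.mpr ⟨by rwa [hq_eq], (isPathFrom_append_cons_iff.mp hp).2⟩
  rcases List.mem_append.mp (hd _ hqw) with h | h
  · exact List.mem_of_mem_dropLast h
  · exact absurd h hdw

theorem Dominates.antisymm {a b : V} (hab : Dominates E r a b) (hba : Dominates E r b a)
    (hb : Reachable E r b) : a = b := by
  obtain ⟨q, hq⟩ := hb
  obtain ⟨u, x, w, rfl, hx, hu⟩ :=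
    List.exists_eq_append_cons_first (P := fun x ↦ x = a ∨ x = b) ⟨b, hq.last_mem, Or.inr rfl⟩
  have hux := (isPathFrom_append_cons_iff.mp hq).1
  rcases hx with rfl | rfl
  · rcases List.mem_append.mp (hba _ hux) with h | h
    · exact absurd (Or.inr rfl) (hu b h)
    · exact (List.mem_singleton.mp h).symm
  · rcases List.mem_append.mp (hab _ hux) with h | h
    · exact absurd (Or.inl rfl) (hu a h)
    · exact List.mem_singleton.mp h

theorem StrictDom.not_strictDom {a b : V} (hab : StrictDom E r a b) (hb : Reachable E r b) :
    ¬ StrictDom E r b a :=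
  fun hba ↦ hab.1 (hab.2.antisymm hba.2 hb)

theorem exists_immDom (hn : Reachable E r n) (hnr : n ≠ r) : ∃ m, ImmDom E r m n := by
  obtain ⟨p, hp⟩ := hn
  obtain ⟨u, m, w, rfl, hm, hw⟩ := List.exists_eq_append_cons_last
    (P := fun x ↦ StrictDom E r x n) ⟨r, hp.head_mem, hnr.symm, dominates_entry⟩
  refine ⟨m, hm, fun d hd hdm ↦ ⟨hdm, hd.2.of_isPathFrom_append_cons hp ?_⟩⟩
  intro hd_mem
  rcases List.mem_cons.mp hd_mem with rfl | hdw
  · exact hdm rfl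
  · exact hw d hdw hd

theorem ImmDom.eq {m' : V} (hm : ImmDom E r m n) (hm' : ImmDom E r m' n)
    (hreach : Reachable E r m) : m' = m := by
  by_contra hne
  exact (hm.2 m' hm'.1 hne).not_strictDom hreach (hm'.2 m hm.1 (Ne.symm hne))

end Dominance

theorem immediate_dominator_exists_unique_general (E : V → V → Prop) (r : V)
    (hreach : ∀ x : V, Reachable E r x)
    (n : V) (hn : n ≠ r) :
    ∃! m : V, ImmDom E r m n := by
  obtain ⟨m, hm⟩ := exists_immDom (hreach n) hn
  exact ⟨m, hm, fun m' hm' ↦ hm.eq hm' (hreach m)⟩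

/-- Every non-entry node has a unique immediate dominator. -/
theorem immediate_dominator_exists_unique (E : V → V → Prop) (r : V)
    (hreach : ∀ x : V, Reachable E r x)
    (hpred : ∀ n : V, n ≠ r → ∃ m : V, E m n ∧ Reachable E r m)
    (n : V) (hn : n ≠ r) :
    ∃! m : V, ImmDom E r m n :=
  immediate_dominator_exists_unique_general E r hreach n hn
end

section
/- Suppose the cut-point sequence c₁, …, c_n of a def-use pair (l_d, l_u, v) is given, where l_d and l_u occur in the sequence and no node of the sequence after l_d redefines v. If a path p from the entry passes through c₁, …, c_n in succession and no node of p strictly between its visits to l_d and l_u redefines v, then p covers the def-use pair with a def-clear subpath; i.e., the pair is covered by p. -/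
variable {V : Type*}

/-- A path covers the def-use pair \`(ld, lu, v)\` with a def-clear subpath:
it visits \`ld\`, then \`lu\`, and no node strictly in between redefines \`v\`. -/
def CoversDC (Redef : V → Prop) (p : List V) (ld lu : V) : Prop :=
  ∃ p₁ mid p₂ : List V, p = p₁ ++ ld :: (mid ++ lu :: p₂) ∧ ∀ x ∈ mid, ¬ Redef x

theorem List.exists_eq_append_cons_append_cons_of_pair_sublist {α : Type*} {a b : α}
    {l : List α} (h : List.Sublist [a, b] l) :
    ∃ l₁ m l₂ : List α, l = l₁ ++ a :: (m ++ b :: l₂) := by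
  obtain ⟨r₁, r₂, rfl, ha, hb⟩ := List.cons_sublist_iff.mp h
  obtain ⟨s, t, rfl⟩ := List.append_of_mem ha
  obtain ⟨u, w, rfl⟩ := List.append_of_mem (List.singleton_sublist.mp hb)
  exact ⟨s, t ++ u, w, by simp⟩

theorem cut_points_sufficient_general (ld lu : V)
    (Redef : V → Prop) (cs₁ cs₂ : List V)
    (p : List V)
    (hsucc : List.Sublist (cs₁ ++ ld :: (cs₂ ++ [lu])) p)
    (hbetween : ∀ p₁ mid p₂ : List V,
      p = p₁ ++ ld :: (mid ++ lu :: p₂) → ∀ x ∈ mid, ¬ Redef x) :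
    CoversDC Redef p ld lu := by
  have hpair : List.Sublist [ld, lu] p := List.Sublist.trans (by simp) hsucc
  obtain ⟨p₁, mid, p₂, rfl⟩ := List.exists_eq_append_cons_append_cons_of_pair_sublist hpair
  exact ⟨p₁, mid, p₂, rfl, hbetween p₁ mid p₂ rfl⟩

/-- Sufficiency: if a path from the entry passes through the cut-point sequence
(which contains `ld` and ends at `lu`, with no cut point after `ld` redefining
`v`) in succession, and no node of the path strictly between its visits to
`ld` and `lu` redefines `v`, then the path covers the pair def-clear. -/
theorem cut_points_sufficient (E : V → V → Prop) (r ld lu : V)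
    (Redef : V → Prop) (cs₁ cs₂ : List V)
    (hcsClear : ∀ x ∈ cs₂, ¬ Redef x)
    (p : List V) (hchain : p.Chain' E) (hhead : p.head? = some r)
    (hsucc : List.Sublist (cs₁ ++ ld :: (cs₂ ++ [lu])) p)
    (hbetween : ∀ p₁ mid p₂ : List V,
      p = p₁ ++ ld :: (mid ++ lu :: p₂) → ∀ x ∈ mid, ¬ Redef x) :
    CoversDC Redef p ld lu :=
  cut_points_sufficient_general ld lu Redef cs₁ cs₂ p hsucc hbetween
end

section
/- Soundness of the instrumentation encoding: in the instrumented transition system where a Boolean flag cover_flag is set to true at l_d, set to false at every node redefining v, and tested at l_u, the state (l_u, cover_flag = true) is reachable from the initial state if and only if the def-use pair (l_d, l_u, v) is feasible in the original control-flow graph. -/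
variable {V : Type*}

/-- One step of the instrumented transition system over (node, flag):
transitions follow edges; upon executing the source node, the flag becomes
\`true\` after \`ld\`, \`false\` after a redefinition, and is unchanged otherwise. -/
def Step [DecidableEq V] (E : V → V → Prop) (ld : V) (Redef : V → Prop)
    [DecidablePred Redef] : V × Bool → V × Bool → Prop :=
  fun s t => E s.1 t.1 ∧
    t.2 = (if s.1 = ld then true else if Redef s.1 then false else s.2)

/-!
The flag is `true` at a node exactly when the run has passed through `ld` and executed no
redefinition since its last visit there. So `(lu, true)` is reachable iff there is a path
`r →* ld`, an edge out of `ld`, and a path to `lu` whose edges all leave non-redefining nodes;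
a path `p₁ ++ ld :: (mid ++ lu :: p₂)` with def-clear `mid` is the same data written as a list.
-/

section Chains

variable {α : Type*} {R : α → α → Prop}

theorem reflTransGen_of_isChain_append_cons {a b : α} {p l : List α}
    (hc : (p ++ b :: l).IsChain R) (hh : (p ++ b :: l).head? = some a) :
    Relation.ReflTransGen R a b := by
  induction p generalizing a with
  | nil => cases hh; rfl
  | cons c p ih =>
    obtain rfl : c = a := by simpa using hh
    obtain ⟨a', ha'⟩ : ∃ a', (p ++ b :: l).head? = some a' :=
      Option.ne_none_iff_exists'.mp (by simp)
    rw [List.cons_append, List.isChain_cons] at hc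
    exact .head (hc.1 a' ha') (ih hc.2 ha')

theorem exists_isChain_append_cons_of_reflTransGen {a b : α} {l : List α}
    (hab : Relation.ReflTransGen R a b) (hl : (b :: l).IsChain R) :
    ∃ p, (p ++ b :: l).IsChain R ∧ (p ++ b :: l).head? = some a := by
  induction hab using Relation.ReflTransGen.head_induction_on with
  | refl => exact ⟨[], hl, rfl⟩
  | head hac _ ih =>
    obtain ⟨p, hc, hh⟩ := ih
    refine ⟨_ :: p, List.isChain_cons.2 ⟨fun y hy => ?_, hc⟩, rfl⟩
    obtain rfl : _ = y := by simpa [hh] using hy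
    exact hac

theorem exists_isChain_cons_append_singleton_iff_comp {P : α → Prop} {a b : α} :
    (∃ mid, (a :: (mid ++ [b])).IsChain R ∧ ∀ x ∈ mid, P x) ↔
      Relation.Comp R (Relation.ReflTransGen fun x y => R x y ∧ P x) a b := by
  constructor
  · rintro ⟨mid, hc, hP⟩
    induction mid generalizing a with
    | nil => exact ⟨b, by simpa using hc, .refl⟩
    | cons c mid ih =>
      rw [List.cons_append, List.isChain_cons_cons] at hc
      obtain ⟨d, hcd, hdb⟩ := ih hc.2 fun x hx => hP x (List.mem_cons_of_mem _ hx)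
      exact ⟨c, hc.1, .head ⟨hcd, hP c List.mem_cons_self⟩ hdb⟩
  · rintro ⟨c, hac, hcb⟩
    induction hcb using Relation.ReflTransGen.head_induction_on generalizing a with
    | refl => exact ⟨[], by simpa using hac, by simp⟩
    | head hcd _ ih =>
      obtain ⟨mid, hc, hP⟩ := ih hcd.1
      exact ⟨_ :: mid, List.isChain_cons_cons.2 ⟨hac, hc⟩, List.forall_mem_cons.2 ⟨hcd.2, hP⟩⟩

end Chains

def DefUseFeasible (E : V → V → Prop) (Redef : V → Prop) (r ld lu : V) : Prop :=
  Relation.ReflTransGen E r ld ∧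
    Relation.Comp E (Relation.ReflTransGen fun x y => E x y ∧ ¬ Redef x) ld lu

theorem exists_path_coversDC_iff_defUseFeasible {E : V → V → Prop} {Redef : V → Prop}
    {r ld lu : V} :
    (∃ p : List V, p.Chain' E ∧ p.head? = some r ∧ CoversDC Redef p ld lu) ↔
      DefUseFeasible E Redef r ld lu := by
  constructor
  · rintro ⟨p, hc, hh, p₁, mid, p₂, rfl, hclear⟩
    exact ⟨reflTransGen_of_isChain_append_cons hc hh,
      exists_isChain_cons_append_singleton_iff_comp.1
        ⟨mid, List.IsChain.infix hc ⟨p₁, p₂, by simp⟩, hclear⟩⟩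
  · rintro ⟨hrld, hseg⟩
    obtain ⟨mid, hc, hclear⟩ := exists_isChain_cons_append_singleton_iff_comp.2 hseg
    obtain ⟨p₁, hp, hh⟩ := exists_isChain_append_cons_of_reflTransGen hrld hc
    exact ⟨_, hp, hh, p₁, mid, [], by simp, hclear⟩

section Instrumentation

variable [DecidableEq V] {E : V → V → Prop} {ld : V} {Redef : V → Prop} [DecidablePred Redef]

theorem reflTransGen_fst_of_reflTransGen_step {s t : V × Bool}
    (h : Relation.ReflTransGen (Step E ld Redef) s t) : Relation.ReflTransGen E s.1 t.1 :=
  h.lift Prod.fst fun _ _ hst => hst.1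

theorem exists_reflTransGen_step_of_reflTransGen {x y : V} (h : Relation.ReflTransGen E x y)
    (b : Bool) : ∃ c, Relation.ReflTransGen (Step E ld Redef) (x, b) (y, c) := by
  induction h with
  | refl => exact ⟨b, .refl⟩
  | tail _ hyz ih =>
    obtain ⟨c, hc⟩ := ih
    exact ⟨_, hc.tail ⟨hyz, rfl⟩⟩

theorem reflTransGen_step_true_of_defClear {a b : V}
    (h : Relation.ReflTransGen (fun x y => E x y ∧ ¬ Redef x) a b) :
    Relation.ReflTransGen (Step E ld Redef) (a, true) (b, true) := by
  induction h with
  | refl => rfl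
  | tail _ hyz ih => exact ih.tail ⟨hyz.1, by simp [hyz.2]⟩

theorem defUseFeasible_of_reflTransGen_step {r : V} {s : V × Bool}
    (h : Relation.ReflTransGen (Step E ld Redef) (r, false) s) (hs : s.2 = true) :
    DefUseFeasible E Redef r ld s.1 := by
  induction h with
  | refl => cases hs
  | @tail s t hrs hst ih =>
    obtain ⟨hE, hflag⟩ := hst
    by_cases hld : s.1 = ld
    · exact ⟨hld ▸ reflTransGen_fst_of_reflTransGen_step hrs, t.1, hld ▸ hE, .refl⟩
    by_cases hR : Redef s.1
    · simp [hld, hR, hs] at hflag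
    obtain ⟨hrld, y, hy, hclear⟩ := ih (by simpa [hld, hR, hs] using hflag.symm)
    exact ⟨hrld, y, hy, hclear.tail ⟨hE, hR⟩⟩

theorem reflTransGen_step_iff_defUseFeasible {r lu : V} :
    Relation.ReflTransGen (Step E ld Redef) (r, false) (lu, true) ↔
      DefUseFeasible E Redef r ld lu := by
  refine ⟨fun h => defUseFeasible_of_reflTransGen_step h rfl, ?_⟩
  rintro ⟨hrld, y, hy, hclear⟩
  obtain ⟨b, hb⟩ := exists_reflTransGen_step_of_reflTransGen (ld := ld) (Redef := Redef) hrld false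
  exact (hb.tail ⟨hy, (if_pos rfl).symm⟩).trans (reflTransGen_step_true_of_defClear hclear)

end Instrumentation

theorem instrumentation_sound_general [DecidableEq V] (E : V → V → Prop) (r ld lu : V)
    (Redef : V → Prop) [DecidablePred Redef] :
    Relation.ReflTransGen (Step E ld Redef) (r, false) (lu, true) ↔
      ∃ p : List V, p.Chain' E ∧ p.head? = some r ∧ CoversDC Redef p ld lu := by
  rw [reflTransGen_step_iff_defUseFeasible, exists_path_coversDC_iff_defUseFeasible]

/-- Soundness of the instrumentation encoding: the state `(lu, true)` is
reachable from `(r, false)` iff the def-use pair `(ld, lu, v)` is feasible. -/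
theorem instrumentation_sound [DecidableEq V] (E : V → V → Prop) (r ld lu : V)
    (Redef : V → Prop) [DecidablePred Redef]
    (hld : ¬ Redef ld) (hne : lu ≠ ld) :
    Relation.ReflTransGen (Step E ld Redef) (r, false) (lu, true) ↔
      ∃ p : List V, p.Chain' E ∧ p.head? = some r ∧ CoversDC Redef p ld lu :=
  instrumentation_sound_general E r ld lu Redef
end

section
/- In the instrumented transition system, along any execution, the flag b is true at a state (n, true) exactly when the most recent visit to l_d occurred after the most recent visit to any redefinition node; formally, for any finite execution trace ending in state (n, true), the trace contains a visit to l_d after which no Redef node occurs. -/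
variable {V : Type*}

section Instrumentation

/-- The final state of the trace has not been executed yet, hence `tr₂.dropLast`. -/
def DefinitionReachesEnd (ld : V) (Redef : V → Prop) (tr : List (V × Bool)) : Prop :=
  ∃ (tr₁ : List (V × Bool)) (s : V × Bool) (tr₂ : List (V × Bool)),
    tr = tr₁ ++ s :: tr₂ ∧ s.1 = ld ∧ ∀ t ∈ tr₂.dropLast, ¬ Redef t.1

variable {ld : V} {Redef : V → Prop}

theorem DefinitionReachesEnd.cons {tr : List (V × Bool)} (s : V × Bool)
    (h : DefinitionReachesEnd ld Redef tr) : DefinitionReachesEnd ld Redef (s :: tr) := by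
  obtain ⟨tr₁, s', tr₂, rfl, hs', hafter⟩ := h
  exact ⟨s :: tr₁, s', tr₂, rfl, hs', hafter⟩

variable [DecidableEq V] {E : V → V → Prop} [DecidablePred Redef]

theorem Step.eq_ld_or_of_snd_eq_true {s t : V × Bool} (h : Step E ld Redef s t)
    (ht : t.2 = true) : s.1 = ld ∨ (¬ Redef s.1 ∧ s.2 = true) := by
  obtain ⟨-, hflag⟩ := h
  split_ifs at hflag with hld hR <;> simp_all

/-- The second alternative makes the claim hold for every suffix of the trace, so it
can be proved by induction from the front. -/
theorem definitionReachesEnd_or_of_isChain (s : V × Bool) (tr : List (V × Bool))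
    (hchain : (s :: tr).IsChain (Step E ld Redef))
    (hlast : ((s :: tr).getLast (List.cons_ne_nil s tr)).2 = true) :
    DefinitionReachesEnd ld Redef (s :: tr) ∨
      (s.2 = true ∧ ∀ t ∈ (s :: tr).dropLast, ¬ Redef t.1) := by
  induction tr generalizing s with
  | nil => exact Or.inr ⟨hlast, by simp⟩
  | cons t tr ih =>
    obtain ⟨hstep, hchain⟩ := List.isChain_cons_cons.mp hchain
    rw [List.getLast_cons_cons] at hlast
    rcases ih t hchain hlast with hdef | ⟨ht, hafter⟩
    · exact Or.inl (hdef.cons s)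
    rcases hstep.eq_ld_or_of_snd_eq_true ht with hs | ⟨hR, hs⟩
    · exact Or.inl ⟨[], s, t :: tr, rfl, hs, hafter⟩
    · refine Or.inr ⟨hs, ?_⟩
      rw [List.dropLast_cons_cons]
      exact List.forall_mem_cons.mpr ⟨hR, hafter⟩

end Instrumentation

theorem flag_invariant_general [DecidableEq V] (E : V → V → Prop) (r ld : V)
    (Redef : V → Prop) [DecidablePred Redef]
    (n : V) (tr : List (V × Bool))
    (hchain : tr.Chain' (Step E ld Redef))
    (hhead : tr.head? = some (r, false))
    (hlast : tr.getLast? = some (n, true)) :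
    ∃ (tr₁ : List (V × Bool)) (s : V × Bool) (tr₂ : List (V × Bool)),
      tr = tr₁ ++ s :: tr₂ ∧ s.1 = ld ∧ ∀ t ∈ tr₂.dropLast, ¬ Redef t.1 := by
  obtain _ | ⟨s, tr⟩ := tr
  · simp at hhead
  obtain rfl : s = (r, false) := by simpa using hhead
  have hend : ((r, false) :: tr).getLast (List.cons_ne_nil _ _) = (n, true) := by
    rwa [List.getLast?_eq_getLast_of_ne_nil, Option.some_inj] at hlast
  rcases definitionReachesEnd_or_of_isChain _ tr hchain (by rw [hend]) with hdef | ⟨hr, -⟩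
  · exact hdef
  · simp at hr

/-- Flag invariant: any finite execution trace from `(r, false)` ending in a
state with flag `true` contains a visit to `ld` after which no redefinition
node is executed (every node executed afterwards, i.e. every state after that
visit except the final not-yet-executed one, is not a redefinition). -/
theorem flag_invariant [DecidableEq V] (E : V → V → Prop) (r ld : V)
    (Redef : V → Prop) [DecidablePred Redef] (hld : ¬ Redef ld)
    (n : V) (tr : List (V × Bool))
    (hchain : tr.Chain' (Step E ld Redef))
    (hhead : tr.head? = some (r, false))
    (hlast : tr.getLast? = some (n, true)) :
    ∃ (tr₁ : List (V × Bool)) (s : V × Bool) (tr₂ : List (V × Bool)),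
      tr = tr₁ ++ s :: tr₂ ∧ s.1 = ld ∧ ∀ t ∈ tr₂.dropLast, ¬ Redef t.1 :=
  flag_invariant_general E r ld Redef n tr hchain hhead hlast
end

section
/- If c₁, …, c_n are the cut points of a def-use pair with c₁ ≫ᴵ c₂ ≫ᴵ … ≫ᴵ c_n forming an immediate-dominator chain ending at l_u, then any path from the entry r to l_u visits c₁, …, c_n and the order of their first occurrences on the path respects the chain order: the first occurrence of c_i precedes the first occurrence of c_{i+1}. -/
/-!
The prefix of a path from `r` that ends at the first occurrence of `b` is itself a path from `r`
to `b`; a strict dominator `a` of `b` must therefore occur in that prefix, i.e. strictly before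
the first occurrence of `b`. Walking the dominator chain backwards from `lu` then places every
cut point on the path, each one first met before its successor.
-/

variable {V : Type*}

section

variable [DecidableEq V] {E : V → V → Prop} {r n : V} {p : List V}

theorem IsPathFrom.take_idxOf_succ {b : V} (hp : IsPathFrom E r n p) (hb : b ∈ p) :
    IsPathFrom E r b (p.take (p.idxOf b + 1)) := by
  obtain ⟨hchain, hhead, -⟩ := hp
  have hlt : p.idxOf b < p.length := List.idxOf_lt_length_of_mem hb
  refine ⟨hchain.prefix (List.take_prefix _ _), by simpa [List.head?_take] using hhead, ?_⟩
  simp [List.getLast?_take, List.getElem?_eq_getElem hlt, List.getElem_idxOf hlt]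

theorem StrictDom.mem_and_idxOf_lt {a b : V} (hab : StrictDom E r a b) (hp : IsPathFrom E r n p)
    (hb : b ∈ p) : a ∈ p ∧ p.idxOf a < p.idxOf b := by
  have ha_take : a ∈ p.take (p.idxOf b + 1) := hab.2 _ (hp.take_idxOf_succ hb)
  have ha : a ∈ p := List.mem_of_mem_take ha_take
  have hle : p.idxOf a < p.idxOf b + 1 := (List.mem_take_iff_idxOf_lt ha).1 ha_take
  have hne : p.idxOf a ≠ p.idxOf b := fun h => hab.1 ((List.idxOf_inj ha).1 h)
  exact ⟨ha, by omega⟩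

theorem IsPathFrom.mem_and_isChain_idxOf_lt (hp : IsPathFrom E r n p) :
    ∀ {cs : List V}, cs.IsChain (StrictDom E r) → cs.getLast? = some n →
      (∀ c ∈ cs, c ∈ p) ∧ cs.IsChain (fun a b => p.idxOf a < p.idxOf b)
  | [], _, _ => by simp
  | [c], _, hlast => by
    obtain rfl : c = n := by simpa using hlast
    simpa using List.mem_of_getLast? hp.2.2
  | a :: b :: t, hchain, hlast => by
    obtain ⟨hab, htail⟩ := List.isChain_cons_cons.1 hchain
    obtain ⟨hmem, hord⟩ := hp.mem_and_isChain_idxOf_lt htail (by simpa using hlast)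
    obtain ⟨ha, hlt⟩ := hab.mem_and_idxOf_lt hp (hmem b List.mem_cons_self)
    exact ⟨List.forall_mem_cons.2 ⟨ha, hmem⟩, List.isChain_cons_cons.2 ⟨hlt, hord⟩⟩

end

theorem cut_point_chain_order_general [DecidableEq V] (E : V → V → Prop) (r lu : V)
    (cs : List V) (hchain : cs.Chain' (fun a b => ImmDom E r a b))
    (hlast : cs.getLast? = some lu) :
    ∀ p : List V, IsPathFrom E r lu p →
      (∀ c ∈ cs, c ∈ p) ∧
      cs.Chain' (fun a b => p.idxOf a < p.idxOf b) :=
  fun _ hp => hp.mem_and_isChain_idxOf_lt (hchain.imp fun _ _ h => h.1) hlast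

/-- A chain of immediate dominators ending at `lu` is visited by every path
from the entry to `lu`, and the first occurrences respect the chain order. -/
theorem cut_point_chain_order [DecidableEq V] (E : V → V → Prop) (r lu : V)
    (hreach : ∀ x : V, Reachable E r x)
    (cs : List V) (hchain : cs.Chain' (fun a b => ImmDom E r a b))
    (hlast : cs.getLast? = some lu) :
    ∀ p : List V, IsPathFrom E r lu p →
      (∀ c ∈ cs, c ∈ p) ∧
      cs.Chain' (fun a b => p.idxOf a < p.idxOf b) :=
  cut_point_chain_order_general E r lu cs hchain hlast
end

section
/- Redefinition path pruning is sound: if a prefix path p from the entry r has visited l_d and subsequently visited a node satisfying Redef (a redefinition of v) without yet visiting l_u and without visiting l_d again after the redefinition, then no extension of p can cover the def-use pair (l_d, l_u, v) using the occurrence of l_d in p unless l_d is visited again; in particular, if l_d cannot be reached again from the current end node of p, every extension of p fails to cover the pair. -/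
variable {V : Type*}

/-!
Write the extended path `(p₁ ++ ld :: (mid ++ x :: p₂)) ++ s` as `q₁ ++ ld :: (m ++ lu :: q₂)`.
The displayed `ld` must be one of the occurrences in `ld :: mid`, since `ld` is absent from
`p₁`, `x :: p₂` and `s`; the displayed `lu` must then lie beyond `x`, since it is absent from
`mid` and differs from `x`. Hence the redefinition `x` lies in `m`.
-/

namespace List

variable {α : Type*}

theorem exists_eq_append_cons_of_append_eq_append_cons {A B q r : List α} {y : α}
    (h : A ++ B = q ++ y :: r) (hy : y ∉ B) : ∃ c, A = q ++ y :: c ∧ r = c ++ B := by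
  rcases append_eq_append_iff.mp h with ⟨a, -, hB⟩ | ⟨c, hA, hc⟩
  · exact absurd (hB ▸ mem_append_right a mem_cons_self) hy
  · rcases cons_eq_append_iff.mp hc with ⟨-, hB⟩ | ⟨c', rfl, hr⟩
    · exact absurd (hB ▸ mem_cons_self) hy
    · exact ⟨c', hA, hr⟩

theorem suffix_of_append_cons_eq_append_cons {A B q c : List α} {y : α}
    (h : A ++ y :: B = q ++ y :: c) (hy : y ∉ A) : c <:+ B := by
  rcases append_eq_append_iff.mp h with ⟨a, -, ha⟩ | ⟨a, hA, ha⟩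
  · rcases cons_eq_append_iff.mp ha with ⟨-, hB⟩ | ⟨a', -, hB⟩
    · exact (cons_inj_right y).mp hB ▸ suffix_refl c
    · exact ⟨a' ++ [y], by simp [hB]⟩
  · rcases cons_eq_append_iff.mp ha with ⟨-, hc⟩ | ⟨a', rfl, -⟩
    · exact (cons_inj_right y).mp hc ▸ suffix_refl B
    · exact absurd (hA ▸ mem_append_right q mem_cons_self) hy

theorem mem_of_append_cons_eq_append_cons {A B q c : List α} {x y : α}
    (h : A ++ y :: B = q ++ x :: c) (hyq : y ∉ q) (hyx : y ≠ x) : x ∈ A := by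
  rcases append_eq_append_iff.mp h with ⟨a, rfl, ha⟩ | ⟨a, rfl, ha⟩
  · rcases cons_eq_append_iff.mp ha with ⟨-, hxy⟩ | ⟨a', rfl, -⟩
    · exact (hyx (head_eq_of_cons_eq hxy).symm).elim
    · exact absurd (mem_append_right A mem_cons_self) hyq
  · rcases cons_eq_append_iff.mp ha with ⟨-, hyx'⟩ | ⟨a', rfl, -⟩
    · exact (hyx (head_eq_of_cons_eq hyx')).elim
    · exact mem_append_right q mem_cons_self

end List

theorem redefinition_pruning_sound_general (E : V → V → Prop) (ld lu : V)
    (Redef : V → Prop) (hldnr : ¬ Redef ld)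
    (p₁ mid p₂ : List V) (x : V) (hx : Redef x)
    (hld₁ : ld ∉ p₁) (hluMid : lu ∉ mid) (hluAfter : lu ∉ x :: p₂)
    (hldAfter : ld ∉ p₂) :
    ∀ s : List V, ((p₁ ++ ld :: (mid ++ x :: p₂)) ++ s).Chain' E → ld ∉ s →
      ¬ CoversDC Redef ((p₁ ++ ld :: (mid ++ x :: p₂)) ++ s) ld lu := by
  rintro s - hlds ⟨q₁, m, q₂, hq, hm⟩
  have hld_tail : ld ∉ x :: (p₂ ++ s) := by
    simp only [List.mem_cons, List.mem_append, not_or]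
    exact ⟨fun h => hldnr (h ▸ hx), hldAfter, hlds⟩
  obtain ⟨c, hc_def, hc_use⟩ :=
    List.exists_eq_append_cons_of_append_eq_append_cons (A := p₁ ++ ld :: mid)
      (by rw [← hq]; simp) hld_tail
  have hc : c <:+ mid := List.suffix_of_append_cons_eq_append_cons hc_def hld₁
  have hxm : x ∈ m := List.mem_of_append_cons_eq_append_cons hc_use
    (fun h => hluMid (hc.subset h)) (fun h => hluAfter (h ▸ List.mem_cons_self))
  exact hm x hxm hx

/-- Soundness of redefinition path pruning: if a prefix path from the entry
has visited `ld` (its unique visit so far), then a redefinition node, without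
visiting `lu` in between or afterwards and without visiting `ld` again after
the redefinition, then every extension of the path that does not visit `ld`
again fails to cover the pair `(ld, lu, v)`. -/
theorem redefinition_pruning_sound (E : V → V → Prop) (r ld lu : V)
    (Redef : V → Prop) (hne : lu ≠ ld) (hldnr : ¬ Redef ld)
    (p₁ mid p₂ : List V) (x : V) (hx : Redef x)
    (hld₁ : ld ∉ p₁) (hluMid : lu ∉ mid) (hluAfter : lu ∉ x :: p₂)
    (hldAfter : ld ∉ p₂)
    (hchain : (p₁ ++ ld :: (mid ++ x :: p₂)).Chain' E)
    (hhead : (p₁ ++ ld :: (mid ++ x :: p₂)).head? = some r) :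
    ∀ s : List V, ((p₁ ++ ld :: (mid ++ x :: p₂)) ++ s).Chain' E → ld ∉ s →
      ¬ CoversDC Redef ((p₁ ++ ld :: (mid ++ x :: p₂)) ++ s) ld lu :=
  redefinition_pruning_sound_general E ld lu Redef hldnr p₁ mid p₂ x hx hld₁ hluMid hluAfter
    hldAfter
end
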